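/- arXiv:2212.11702 — 2 statements merged into one kernel-verified Lean document; each statement's English description precedes it below -/
import Mathlib

section
/- Fix an integer k ≥ 2, a unit vector v ∈ EuclideanSpace ℝ (Fin m) (‖v‖ = 1), labels y, z̄ : Fin k with z̄ ≠ y, and λ > 0. Define W : Fin k → EuclideanSpace ℝ (Fin m) by W z̄ = λ • v and W z = 0 for z ≠ z̄. Then ∑_{z} ‖W z‖ = λ, and the gradient G(W) of the map W' ↦ ℓ(W'v, y) at W satisfies ‖G(W)‖_F = sqrt( (e^λ + k - 2)² + e^{2λ} + k - 2 ) / (e^λ + k - 1). -/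
open RealInnerProductSpace

/-- The softmax of a score vector. -/
noncomputable def softmax (k : ℕ) (a : Fin k → ℝ) (z : Fin k) : ℝ :=
  Real.exp (a z) / ∑ w : Fin k, Real.exp (a w)

/-!
At this classifier the scores are `λ` at `z̄` and `0` elsewhere, so with `S = e^λ + k - 1` the
softmax is `e^λ / S` at `z̄` and `1 / S` elsewhere. As `‖v‖ = 1`, the squared Frobenius norm is
`∑ z, (p_z - δ_{zy})² = (e^λ / S)² + (1 / S - 1)² + (k - 2) / S²`, which simplifies to the claimed
value over `S²`.
-/

lemma sum_norm_ite_eq {ι E : Type*} [Fintype ι] [DecidableEq ι] [SeminormedAddCommGroup E]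
    (i : ι) (x : E) : ∑ z : ι, ‖if z = i then x else 0‖ = ‖x‖ := by
  simp [apply_ite norm]

lemma inner_ite_smul_left_of_norm_eq_one {ι E : Type*} [DecidableEq ι]
    [NormedAddCommGroup E] [InnerProductSpace ℝ E] {v : E} (hv : ‖v‖ = 1) (i w : ι) (a : ℝ) :
    ⟪if w = i then a • v else 0, v⟫ = if w = i then a else 0 := by
  split_ifs <;> simp [real_inner_smul_left, hv]

lemma sum_exp_ite_eq {ι : Type*} [Fintype ι] [DecidableEq ι] (i : ι) (a : ℝ) :
    ∑ w : ι, Real.exp (if w = i then a else 0) = Real.exp a + Fintype.card ι - 1 := by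
  have hsplit : ∀ w : ι, Real.exp (if w = i then a else 0) =
      (if w = i then Real.exp a - 1 else 0) + 1 := by
    intro w; split_ifs <;> simp
  simp only [hsplit, Finset.sum_add_distrib, Finset.sum_ite_eq', Finset.mem_univ, if_true,
    Finset.sum_const, Finset.card_univ, nsmul_eq_mul, mul_one]
  ring

lemma softmax_ite_eq {k : ℕ} (i : Fin k) (a : ℝ) (z : Fin k) :
    softmax k (fun w => if w = i then a else 0) z =
      if z = i then Real.exp a / (Real.exp a + k - 1) else 1 / (Real.exp a + k - 1) := by
  rw [softmax, sum_exp_ite_eq, Fintype.card_fin]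
  split_ifs <;> simp

lemma sum_sq_ite_sub_ite {ι : Type*} [Fintype ι] [DecidableEq ι] {i j : ι} (hij : i ≠ j)
    (b c : ℝ) :
    ∑ z : ι, ((if z = i then b else c) - if z = j then 1 else 0) ^ 2 =
      b ^ 2 + (c - 1) ^ 2 + (Fintype.card ι - 2) * c ^ 2 := by
  have hsplit : ∀ z : ι, ((if z = i then b else c) - if z = j then 1 else 0) ^ 2 =
      c ^ 2 + (if z = i then b ^ 2 - c ^ 2 else 0) + (if z = j then (c - 1) ^ 2 - c ^ 2 else 0) := by
    intro z
    by_cases hzi : z = i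
    · subst hzi; simp [hij]
    · by_cases hzj : z = j
      · subst hzj; simp [hzi]
      · simp [hzi, hzj]
  simp only [hsplit, Finset.sum_add_distrib, Finset.sum_ite_eq', Finset.mem_univ, if_true,
    Finset.sum_const, Finset.card_univ, nsmul_eq_mul]
  ring

theorem classifier_grad_norm_at_single_row_general
    (k m : ℕ)
    (v : EuclideanSpace ℝ (Fin m)) (hv : ‖v‖ = 1)
    (y zb : Fin k) (hzb : zb ≠ y) (lam : ℝ) (hlam : 0 < lam)
    (W : Fin k → EuclideanSpace ℝ (Fin m))
    (hW : W = fun z => if z = zb then lam • v else 0) :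
    (∑ z : Fin k, ‖W z‖) = lam ∧
    Real.sqrt (∑ z : Fin k,
        ‖(softmax k (fun w => ⟪W w, v⟫) z - if z = y then 1 else 0) • v‖ ^ 2) =
      Real.sqrt ((Real.exp lam + k - 2) ^ 2 + Real.exp (2 * lam) + k - 2) /
        (Real.exp lam + k - 1) := by
  subst hW
  refine ⟨by rw [sum_norm_ite_eq, norm_smul, hv, mul_one, Real.norm_of_nonneg hlam.le], ?_⟩
  have hk : (1 : ℝ) ≤ k := by exact_mod_cast y.pos
  have hS : 0 < Real.exp lam + k - 1 := by linarith [Real.exp_pos lam]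
  simp only [inner_ite_smul_left_of_norm_eq_one hv, softmax_ite_eq, norm_smul, hv, mul_one,
    Real.norm_eq_abs, sq_abs, sum_sq_ite_sub_ite hzb, Fintype.card_fin]
  conv_rhs => rw [← Real.sqrt_sq hS.le, ← Real.sqrt_div' _ (sq_nonneg _)]
  congr 1
  rw [two_mul, Real.exp_add]
  field_simp
  ring

/-- For the classifier `W` whose only nonzero row is `W z̄ = λ • v`
(with `z̄ ≠ y` and `‖v‖ = 1`), the `(2,1)`-norm of `W` is `λ`, and the Frobenius norm of the
gradient of `W' ↦ ℓ(W'v, y)` at `W` equals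
`√((e^λ + k - 2)² + e^{2λ} + k - 2) / (e^λ + k - 1)`. -/
theorem classifier_grad_norm_at_single_row
    (k m : ℕ) (hk : 2 ≤ k) (hm : 0 < m)
    (v : EuclideanSpace ℝ (Fin m)) (hv : ‖v‖ = 1)
    (y zb : Fin k) (hzb : zb ≠ y) (lam : ℝ) (hlam : 0 < lam)
    (W : Fin k → EuclideanSpace ℝ (Fin m))
    (hW : W = fun z => if z = zb then lam • v else 0) :
    (∑ z : Fin k, ‖W z‖) = lam ∧
    Real.sqrt (∑ z : Fin k,
        ‖(softmax k (fun w => ⟪W w, v⟫) z - if z = y then 1 else 0) • v‖ ^ 2) =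
      Real.sqrt ((Real.exp lam + k - 2) ^ 2 + Real.exp (2 * lam) + k - 2) /
        (Real.exp lam + k - 1) :=
  classifier_grad_norm_at_single_row_general k m v hv y zb hzb lam hlam W hW
end

section
/- Fix an integer k ≥ 2, a unit vector v ∈ EuclideanSpace ℝ (Fin m), a label y : Fin k, and λ > 0. Define M_k(λ) = sSup { ‖G(W)‖_F : W : Fin k → EuclideanSpace ℝ (Fin m), ∑_z ‖W z‖ ≤ λ }, where G(W) is the family of rows G(W)_z = (softmax(Wv)_z - δ_{z y}) • v (the gradient of W ↦ ℓ(Wv, y)). Then f_k(λ) ≤ M_k(λ) ≤ sqrt(2), where f_k(λ) = sqrt( (e^λ + k - 2)² + e^{2λ} + k - 2 ) / (e^λ + k - 1). -/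
open RealInnerProductSpace

/-- The Frobenius norm of the gradient of `W ↦ ℓ(Wv, y)` with respect to the classifier `W`:
the `z`-th row of the gradient is `(softmax(Wv)_z - δ_{z y}) • v`. -/
noncomputable def classifierGradNorm (k m : ℕ) (v : EuclideanSpace ℝ (Fin m)) (y : Fin k)
    (W : Fin k → EuclideanSpace ℝ (Fin m)) : ℝ :=
  Real.sqrt (∑ z : Fin k,
    ‖(softmax k (fun w => ⟪W w, v⟫) z - if z = y then 1 else 0) • v‖ ^ 2)

/-- The supremal classifier-gradient norm over the `(2,1)`-norm ball of radius `λ`. -/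
noncomputable def supGradNorm (k m : ℕ) (v : EuclideanSpace ℝ (Fin m)) (y : Fin k)
    (lam : ℝ) : ℝ :=
  sSup { r : ℝ | ∃ W : Fin k → EuclideanSpace ℝ (Fin m),
    (∑ z : Fin k, ‖W z‖) ≤ lam ∧ r = classifierGradNorm k m v y W }

/-- The gradient-norm value
`f_k(λ) = √((e^λ + k - 2)² + e^{2λ} + k - 2) / (e^λ + k - 1)`. -/
noncomputable def fGrad (k : ℕ) (lam : ℝ) : ℝ :=
  Real.sqrt ((Real.exp lam + k - 2) ^ 2 + Real.exp (2 * lam) + k - 2) /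
    (Real.exp lam + k - 1)

-- auxiliary lemmas

lemma softmax_nonneg (k : ℕ) (hk : 1 ≤ k) (a : Fin k → ℝ) (z : Fin k) :
    0 ≤ softmax k a z := by
  have : Nonempty (Fin k) := ⟨⟨0, hk⟩⟩
  have hE : 0 < ∑ w : Fin k, Real.exp (a w) :=
    Finset.sum_pos (fun w _ => Real.exp_pos _) Finset.univ_nonempty
  exact div_nonneg (Real.exp_pos _).le hE.le

lemma softmax_sum (k : ℕ) (hk : 1 ≤ k) (a : Fin k → ℝ) :
    ∑ z : Fin k, softmax k a z = 1 := by
  have : Nonempty (Fin k) := ⟨⟨0, hk⟩⟩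
  have hE : 0 < ∑ w : Fin k, Real.exp (a w) :=
    Finset.sum_pos (fun w _ => Real.exp_pos _) Finset.univ_nonempty
  simp [softmax, ← Finset.sum_div, div_self hE.ne']

lemma softmax_le_one (k : ℕ) (hk : 1 ≤ k) (a : Fin k → ℝ) (z : Fin k) :
    softmax k a z ≤ 1 := by
  have : Nonempty (Fin k) := ⟨⟨0, hk⟩⟩
  have hE : 0 < ∑ w : Fin k, Real.exp (a w) :=
    Finset.sum_pos (fun w _ => Real.exp_pos _) Finset.univ_nonempty
  rw [softmax, div_le_one hE]
  exact Finset.single_le_sum (fun w _ => (Real.exp_pos _).le) (Finset.mem_univ z)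

lemma gradNorm_le_sqrt_two (k m : ℕ) (hk : 2 ≤ k)
    (v : EuclideanSpace ℝ (Fin m)) (hv : ‖v‖ = 1) (y : Fin k)
    (W : Fin k → EuclideanSpace ℝ (Fin m)) :
    classifierGradNorm k m v y W ≤ Real.sqrt 2 := by
  have hk1 : 1 ≤ k := le_trans (by norm_num) hk
  set a : Fin k → ℝ := fun w => ⟪W w, v⟫ with ha
  set p : Fin k → ℝ := softmax k a with hp
  have hnn := softmax_nonneg k hk1 a
  have hle := softmax_le_one k hk1 a
  have hsum := softmax_sum k hk1 a
  apply Real.sqrt_le_sqrt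
  have hterm : ∀ z : Fin k,
      ‖(p z - if z = y then 1 else 0) • v‖ ^ 2 = (p z - if z = y then 1 else 0) ^ 2 := by
    intro z
    rw [norm_smul, hv, mul_one, Real.norm_eq_abs, sq_abs]
  rw [show (∑ z : Fin k, ‖(softmax k (fun w => ⟪W w, v⟫) z - if z = y then 1 else 0) • v‖ ^ 2)
      = ∑ z : Fin k, (p z - if z = y then 1 else 0) ^ 2 from Finset.sum_congr rfl
        (fun z _ => hterm z)]
  set g : Fin k → ℝ := fun z => (p z - if z = y then 1 else 0) ^ 2 with hg
  have h1 : ∑ z ∈ Finset.univ.erase y, g z + g y = ∑ z : Fin k, g z :=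
    Finset.sum_erase_add _ _ (Finset.mem_univ y)
  have h2 : ∑ z ∈ Finset.univ.erase y, p z + p y = 1 := by
    rw [Finset.sum_erase_add _ _ (Finset.mem_univ y), hsum]
  have h3 : ∑ z ∈ Finset.univ.erase y, g z ≤ 1 - p y := by
    have : ∑ z ∈ Finset.univ.erase y, g z ≤ ∑ z ∈ Finset.univ.erase y, p z := by
      apply Finset.sum_le_sum
      intro z hz
      have hzy : z ≠ y := Finset.ne_of_mem_erase hz
      show (p z - if z = y then 1 else 0) ^ 2 ≤ p z
      rw [if_neg hzy, sub_zero]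
      nlinarith [hnn z, hle z]
    linarith
  have h4 : g y ≤ 1 - p y := by
    show (p y - if y = y then 1 else 0) ^ 2 ≤ 1 - p y
    rw [if_pos rfl]
    nlinarith [hnn y, hle y]
  nlinarith [hnn y]

/-- The supremal classifier-gradient norm `M_k(λ)` over the `(2,1)`-ball of
radius `λ` satisfies `f_k(λ) ≤ M_k(λ) ≤ √2`. -/
theorem fGrad_le_supGradNorm_le_sqrt_two
    (k m : ℕ) (hk : 2 ≤ k) (hm : 0 < m)
    (v : EuclideanSpace ℝ (Fin m)) (hv : ‖v‖ = 1)
    (y : Fin k) (lam : ℝ) (hlam : 0 < lam) :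
    fGrad k lam ≤ supGradNorm k m v y lam ∧ supGradNorm k m v y lam ≤ Real.sqrt 2 := by
  have hk1 : 1 ≤ k := le_trans (by norm_num) hk
  have hkR : (2 : ℝ) ≤ (k : ℝ) := by exact_mod_cast hk
  constructor
  · -- lower bound
    have : Nontrivial (Fin k) := Fin.nontrivial_iff_two_le.mpr hk
    obtain ⟨zb, hzb⟩ := exists_ne y
    set W : Fin k → EuclideanSpace ℝ (Fin m) :=
      fun z => if z = zb then lam • v else 0 with hW
    have hWnorm : ∑ z : Fin k, ‖W z‖ ≤ lam := by
      have : ∀ z : Fin k, ‖W z‖ = if z = zb then lam else 0 := by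
        intro z
        by_cases h : z = zb <;>
          simp [hW, h, norm_smul, hv, abs_of_pos hlam]
      rw [Finset.sum_congr rfl fun z _ => this z, Finset.sum_ite_eq' Finset.univ zb]
      simp
    set S : ℝ := Real.exp lam + (k : ℝ) - 1 with hS
    have hSpos : 0 < S := by
      have := Real.exp_pos lam
      simp only [hS]; linarith
    have ha : ∀ w : Fin k, ⟪W w, v⟫ = if w = zb then lam else 0 := by
      intro w
      by_cases h : w = zb
      · rw [if_pos h, show W w = lam • v from by rw [hW]; simp [h]]
        rw [real_inner_smul_left, real_inner_self_eq_norm_sq, hv]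
        norm_num
      · rw [if_neg h, show W w = 0 from by rw [hW]; simp [h], inner_zero_left]
    have hE : ∑ w : Fin k, Real.exp ⟪W w, v⟫ = S := by
      have : ∀ w : Fin k, Real.exp ⟪W w, v⟫
          = (if w = zb then Real.exp lam - 1 else 0) + 1 := by
        intro w
        by_cases h : w = zb <;> simp [ha, h]
      rw [Finset.sum_congr rfl fun w _ => this w, Finset.sum_add_distrib,
        Finset.sum_ite_eq' Finset.univ zb]
      simp [hS]
      ring
    have hp : ∀ z : Fin k, softmax k (fun w => ⟪W w, v⟫) z
        = (if z = zb then Real.exp lam else 1) / S := by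
      intro z
      rw [softmax, hE]
      by_cases h : z = zb <;> simp [ha, h]
    -- compute the gradient norm of W
    set g : Fin k → ℝ := fun z =>
      ‖(softmax k (fun w => ⟪W w, v⟫) z - if z = y then 1 else 0) • v‖ ^ 2 with hg
    have hgval : ∀ z : Fin k,
        g z = ((if z = zb then Real.exp lam else 1) / S - if z = y then 1 else 0) ^ 2 := by
      intro z
      simp only [hg, norm_smul, hv, mul_one, Real.norm_eq_abs, sq_abs, hp z]
    have hmemzb : zb ∈ Finset.univ.erase y := Finset.mem_erase.mpr ⟨hzb, Finset.mem_univ zb⟩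
    have hsplit1 : ∑ z ∈ Finset.univ.erase y, g z + g y = ∑ z : Fin k, g z :=
      Finset.sum_erase_add _ _ (Finset.mem_univ y)
    have hsplit2 : ∑ z ∈ (Finset.univ.erase y).erase zb, g z + g zb
        = ∑ z ∈ Finset.univ.erase y, g z :=
      Finset.sum_erase_add _ _ hmemzb
    have hcard : ((Finset.univ.erase y).erase zb).card = k - 2 := by
      rw [Finset.card_erase_of_mem hmemzb, Finset.card_erase_of_mem (Finset.mem_univ y)]
      simp only [Finset.card_univ, Fintype.card_fin]
      omega
    have hconst : ∑ z ∈ (Finset.univ.erase y).erase zb, g z = ((k : ℝ) - 2) * (1 / S) ^ 2 := by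
      have : ∀ z ∈ (Finset.univ.erase y).erase zb, g z = (1 / S) ^ 2 := by
        intro z hz
        have h1 : z ≠ zb := Finset.ne_of_mem_erase hz
        have h2 : z ≠ y := Finset.ne_of_mem_erase (Finset.mem_of_mem_erase hz)
        rw [hgval z, if_neg h1, if_neg h2, sub_zero]
      rw [Finset.sum_congr rfl this, Finset.sum_const, hcard, nsmul_eq_mul]
      congr 1
      have : ((k - 2 : ℕ) : ℝ) = (k : ℝ) - 2 := by
        push_cast [Nat.cast_sub hk]; ring
      exact this
    have hgzb : g zb = (Real.exp lam / S) ^ 2 := by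
      rw [hgval zb, if_pos rfl, if_neg hzb, sub_zero]
    have hgy : g y = (1 / S - 1) ^ 2 := by
      rw [hgval y, if_neg (Ne.symm hzb), if_pos rfl]
    have hT : ∑ z : Fin k, g z
        = ((Real.exp lam + k - 2) ^ 2 + Real.exp (2 * lam) + k - 2) / S ^ 2 := by
      rw [← hsplit1, ← hsplit2, hconst, hgzb, hgy]
      have h2lam : Real.exp (2 * lam) = Real.exp lam ^ 2 := by
        rw [two_mul, Real.exp_add]; ring
      field_simp
      rw [h2lam, hS]
      ring
    have hnorm : classifierGradNorm k m v y W = fGrad k lam := by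
      rw [classifierGradNorm, fGrad]
      rw [show (∑ z : Fin k,
        ‖(softmax k (fun w => ⟪W w, v⟫) z - if z = y then 1 else 0) • v‖ ^ 2) = ∑ z, g z from rfl,
        hT, ← hS]
      have hN : (0:ℝ) ≤ (Real.exp lam + k - 2) ^ 2 + Real.exp (2 * lam) + k - 2 := by
        nlinarith [Real.exp_pos (2 * lam), sq_nonneg (Real.exp lam + (k:ℝ) - 2)]
      rw [Real.sqrt_div hN, Real.sqrt_sq hSpos.le]
    rw [supGradNorm, ← hnorm]
    apply le_csSup
    · refine ⟨Real.sqrt 2, ?_⟩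
      rintro r ⟨W', -, rfl⟩
      exact gradNorm_le_sqrt_two k m hk v hv y W'
    · exact ⟨W, hWnorm, rfl⟩
  · -- upper bound
    apply Real.sSup_le
    · rintro r ⟨W, -, rfl⟩
      exact gradNorm_le_sqrt_two k m hk v hv y W
    · exact Real.sqrt_nonneg 2
end
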